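/- In a free group, if two elements u and v commute, then they are both powers of a common element. -/

import Mathlib

/-!
By Nielsen–Schreier the subgroup generated by `u` and `v` is free, and it is abelian because `u`
and `v` commute. A free group on two distinct generators `a`, `b` is not abelian (the reduced
words `ab` and `ba` differ), so this subgroup has at most one free generator and is cyclic.
-/

theorem FreeGroup.eq_of_commute_of {α : Type*} {a b : α}
    (h : Commute (FreeGroup.of a) (FreeGroup.of b)) : a = b := by
  classical
  have hword : a = b ∧ b = a := by
    simpa [FreeGroup.toWord_mul, FreeGroup.toWord_of] using congrArg FreeGroup.toWord h.eq
  exact hword.1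

instance FreeGroup.isCyclic_of_subsingleton {α : Type*} [Subsingleton α] :
    IsCyclic (FreeGroup α) := by
  cases isEmpty_or_nonempty α
  · exact _root_.isCyclic_of_subsingleton
  · have : Unique α := uniqueOfSubsingleton (Classical.arbitrary α)
    infer_instance

theorem IsFreeGroup.isCyclic_of_isMulCommutative {G : Type*} [Group G] [IsFreeGroup G]
    [IsMulCommutative G] : IsCyclic G := by
  let e := IsFreeGroup.toFreeGroup G
  have : Subsingleton (IsFreeGroup.Generators G) := ⟨fun a b => FreeGroup.eq_of_commute_of <| by
    simpa using Commute.map (mul_comm' (e.symm (FreeGroup.of a)) (e.symm (FreeGroup.of b))) e⟩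
  exact isCyclic_of_surjective e.symm e.symm.surjective

/-- In a free group, two commuting elements are powers of a common element. -/
theorem freeGroup_commute_common_power {α : Type*} (u v : FreeGroup α)
    (h : u * v = v * u) :
    ∃ (z : FreeGroup α) (m n : ℤ), u = z ^ m ∧ v = z ^ n := by
  let H := Subgroup.closure {u, v}
  have : IsMulCommutative H := Subgroup.isMulCommutative_closure <| by
    rintro x (rfl | rfl) y (rfl | rfl) <;> first | rfl | exact h | exact h.symm
  obtain ⟨z, hz⟩ := (IsFreeGroup.isCyclic_of_isMulCommutative (G := H)).exists_generator
  have hu : u ∈ H := Subgroup.subset_closure (by simp)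
  have hv : v ∈ H := Subgroup.subset_closure (by simp)
  obtain ⟨m, hm⟩ := Subgroup.mem_zpowers_iff.1 (hz ⟨u, hu⟩)
  obtain ⟨n, hn⟩ := Subgroup.mem_zpowers_iff.1 (hz ⟨v, hv⟩)
  exact ⟨z, m, n, by rw [← Subgroup.coe_zpow, hm], by rw [← Subgroup.coe_zpow, hn]⟩
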